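/- For every integer n ≥ 1, the following identity holds in ℚ[x]: B_n^F(x) + F_n·x^{n−1} = x^n + ∑_{j=2}^{n} [n choose j]_F · b_j^F · x^{n−j}. -/

import Mathlib

def fibFact (n : ℕ) : ℕ := ∏ i ∈ Finset.range n, Nat.fib (i + 1)

def fibonomial (n k : ℕ) : ℚ := (fibFact n : ℚ) / ((fibFact k : ℚ) * (fibFact (n - k) : ℚ))

/-!
Writing `E(x, z) = ∑ xⁿ zⁿ / Fₙ!`, the defining identity reads
`B(x, z) (E(1, z) - 1) = z E(x, z)`. At `x = 0`, where `E(0, z) = 1`, it gives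
`b(z) (E(1, z) - 1) = z`, hence `B(x, z) = b(z) E(x, z)`: comparing coefficients of `zⁿ`
expresses `Bₙ(x)` as a Fibonomial convolution of the `bⱼ` with the powers of `x`.
The terms `j = 0, 1` of that convolution are `xⁿ` and `-Fₙ xⁿ⁻¹`, since `b₀ = 1` and
`b₁ = -1` are read off from the coefficients of `z` and `z²` in `b(z) (E(1, z) - 1) = z`.
-/

lemma fibFact_zero : fibFact 0 = 1 := rfl

lemma fibFact_succ (n : ℕ) : fibFact (n + 1) = fibFact n * Nat.fib (n + 1) :=
  Finset.prod_range_succ _ _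

lemma fibFact_one : fibFact 1 = 1 := by simp [fibFact_succ, fibFact_zero]

lemma fibFact_pos (n : ℕ) : 0 < fibFact n :=
  Finset.prod_pos fun i _ => Nat.fib_pos.mpr i.succ_pos

@[simp]
lemma fibFact_ne_zero (n : ℕ) : fibFact n ≠ 0 :=
  (fibFact_pos n).ne'

lemma fibonomial_zero_right (n : ℕ) : fibonomial n 0 = 1 := by
  simp [fibonomial, fibFact_zero]

lemma fibonomial_succ_one (n : ℕ) : fibonomial (n + 1) 1 = Nat.fib (n + 1) := by
  simp [fibonomial, fibFact_zero, fibFact_succ]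

lemma inv_fibFact_mul_inv_fibFact (n j : ℕ) :
    (fibFact j : ℚ)⁻¹ * (fibFact (n - j) : ℚ)⁻¹ = (fibFact n : ℚ)⁻¹ * fibonomial n j := by
  simp only [fibonomial]
  field_simp

namespace PowerSeries

variable {R S : Type*} [CommRing R] [Algebra ℚ R] [CommRing S] [Algebra ℚ S]

def fibEGF (a : ℕ → R) : R⟦X⟧ :=
  mk fun n => algebraMap ℚ R (fibFact n : ℚ)⁻¹ * a n

def fibExp (x : R) : R⟦X⟧ :=
  fibEGF (x ^ ·)

variable (R) in
def fibExpSubOne : R⟦X⟧ :=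
  fibEGF fun n => if n = 0 then 0 else 1

@[simp]
lemma coeff_fibEGF (a : ℕ → R) (n : ℕ) :
    coeff n (fibEGF a) = algebraMap ℚ R (fibFact n : ℚ)⁻¹ * a n :=
  coeff_mk _ _

@[simp]
lemma fibEGF_zero : fibEGF (0 : ℕ → R) = 0 := by
  ext n; simp

lemma fibEGF_injective : Function.Injective (fibEGF : (ℕ → R) → R⟦X⟧) := by
  intro a c h
  funext n
  have hunit : algebraMap ℚ R (fibFact n : ℚ) * algebraMap ℚ R (fibFact n : ℚ)⁻¹ = 1 := by
    rw [← map_mul, mul_inv_cancel₀ (by simp), map_one]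
  have hn := congrArg (coeff n) h
  rw [coeff_fibEGF, coeff_fibEGF] at hn
  linear_combination algebraMap ℚ R (fibFact n : ℚ) * hn + (c n - a n) * hunit

lemma map_fibEGF (f : R →+* S) (a : ℕ → R) : map f (fibEGF a) = fibEGF (f ∘ a) := by
  ext n; simp [RingHom.map_rat_algebraMap]

lemma map_fibExp (f : R →+* S) (x : R) : map f (fibExp x) = fibExp (f x) := by
  simp [fibExp, map_fibEGF, Function.comp_def]

lemma map_fibExpSubOne (f : R →+* S) : map f (fibExpSubOne R) = fibExpSubOne S := by
  simp [fibExpSubOne, map_fibEGF, Function.comp_def, apply_ite]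

lemma fibExp_zero : fibExp (0 : R) = 1 := by
  ext n; cases n <;> simp [fibExp, fibFact_zero]

lemma fibExpSubOne_ne_zero [Nontrivial R] : fibExpSubOne R ≠ 0 := by
  rw [fibExpSubOne, ← fibEGF_zero, fibEGF_injective.ne_iff, Function.ne_iff]
  exact ⟨1, by simp⟩

lemma X_eq_fibEGF : (X : R⟦X⟧) = fibEGF fun n => if n = 1 then 1 else 0 := by
  ext n; by_cases h : n = 1 <;> simp [h, fibFact_one, coeff_X]

lemma fibEGF_mul (a c : ℕ → R) :
    fibEGF a * fibEGF c = fibEGF fun n =>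
      ∑ j ∈ Finset.range (n + 1), algebraMap ℚ R (fibonomial n j) * a j * c (n - j) := by
  ext n
  simp only [coeff_mul, Finset.Nat.sum_antidiagonal_eq_sum_range_succ_mk, coeff_fibEGF,
    Finset.mul_sum]
  refine Finset.sum_congr rfl fun j _ => ?_
  have h := congrArg (algebraMap ℚ R) (inv_fibFact_mul_inv_fibFact n j)
  simp only [map_mul] at h
  linear_combination (a j * c (n - j)) * h

lemma eq_one_and_eq_neg_one_of_fibEGF_mul_eq_X {b : ℕ → R}
    (h : fibEGF b * fibExpSubOne R = X) : b 0 = 1 ∧ b 1 = -1 := by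
  rw [fibExpSubOne, fibEGF_mul, X_eq_fibEGF] at h
  have hcoeff := congr_fun (fibEGF_injective h)
  have h1 : b 0 = 1 := by simpa [Finset.sum_range_succ, fibonomial_zero_right] using hcoeff 1
  have h2 : b 0 + b 1 = 0 := by
    simpa [Finset.sum_range_succ, fibonomial_zero_right, fibonomial_succ_one] using hcoeff 2
  exact ⟨h1, by linear_combination h2 - h1⟩

section Appell

variable {B : ℕ → Polynomial R}

lemma fibEGF_eval_zero_mul_eq_X (hB : fibEGF B * fibExpSubOne _ = X * fibExp Polynomial.X) :
    fibEGF (fun j => (B j).eval 0) * fibExpSubOne R = X := by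
  have h := congrArg (map (Polynomial.evalRingHom 0)) hB
  simpa [map_fibEGF, map_fibExp, map_fibExpSubOne, Function.comp_def, fibExp_zero] using h

lemma fibEGF_eq_mul_fibExp [IsDomain R]
    (hB : fibEGF B * fibExpSubOne _ = X * fibExp Polynomial.X) :
    fibEGF B = fibEGF (fun j => Polynomial.C ((B j).eval 0)) * fibExp Polynomial.X := by
  have hb := congrArg (map Polynomial.C) (fibEGF_eval_zero_mul_eq_X hB)
  simp only [map_mul, map_fibEGF, map_fibExpSubOne, map_X, Function.comp_def] at hb
  refine mul_right_cancel₀ fibExpSubOne_ne_zero ?_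
  rw [hB, ← hb]
  ring

lemma eq_sum_fibonomial_of_fibEGF_mul [IsDomain R]
    (hB : fibEGF B * fibExpSubOne _ = X * fibExp Polynomial.X) (n : ℕ) :
    B n = ∑ j ∈ Finset.range (n + 1),
      Polynomial.C (algebraMap ℚ R (fibonomial n j) * (B j).eval 0) * Polynomial.X ^ (n - j) := by
  rw [congr_fun (fibEGF_injective ((fibEGF_eq_mul_fibExp hB).trans (fibEGF_mul _ _))) n]
  simp only [Polynomial.algebraMap_apply, Polynomial.C_mul]

end Appell

end PowerSeries

open PowerSeries

/-- For every `n ≥ 1`,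
`B_n^F(x) + F_n * x^{n-1} = x^n + ∑_{j=2}^{n} [n choose j]_F * b_j^F * x^{n-j}` in `ℚ[x]`,
where `b_j^F = B_j^F(0)`. Here `B` is the (unique) sequence of Bernoulli–Fibonacci
polynomials, characterized by the generating-function identity
`(∑ B_n(x) z^n/F_n!) * (∑_{n≥1} z^n/F_n!) = z * ∑ x^n z^n/F_n!` in `(ℚ[x])⟦z⟧`. -/
theorem bernoulliFib_H_expansion'
    (B : ℕ → Polynomial ℚ)
    (hB : (PowerSeries.mk fun n => Polynomial.C ((fibFact n : ℚ)⁻¹) * B n) *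
          (PowerSeries.mk fun n =>
            if n = 0 then 0 else Polynomial.C ((fibFact n : ℚ)⁻¹)) =
          PowerSeries.X *
          PowerSeries.mk (fun n => Polynomial.C ((fibFact n : ℚ)⁻¹) * Polynomial.X ^ n))
    (n : ℕ) (hn : 1 ≤ n) :
    B n + Polynomial.C ((Nat.fib n : ℚ)) * Polynomial.X ^ (n - 1) =
      Polynomial.X ^ n + ∑ j ∈ Finset.Icc 2 n,
        Polynomial.C (fibonomial n j * (B j).eval 0) * Polynomial.X ^ (n - j) := by
  have hS : (mk fun n => if n = 0 then 0 else Polynomial.C ((fibFact n : ℚ)⁻¹)) =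
      fibExpSubOne (Polynomial ℚ) := by
    ext n; by_cases h : n = 0 <;> simp [fibExpSubOne, h]
  -- the other two series in `hB` are `fibEGF B` and `fibExp X` by unfolding
  replace hB : fibEGF B * fibExpSubOne _ = X * fibExp Polynomial.X := hS ▸ hB
  obtain ⟨hb0, hb1⟩ := eq_one_and_eq_neg_one_of_fibEGF_mul_eq_X (fibEGF_eval_zero_mul_eq_X hB)
  obtain ⟨m, rfl⟩ := Nat.exists_eq_add_of_le' hn
  rw [eq_sum_fibonomial_of_fibEGF_mul hB, Finset.range_eq_Ico,
    Finset.sum_eq_sum_Ico_succ_bot (by omega), Finset.sum_eq_sum_Ico_succ_bot (by omega),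
    Finset.Ico_add_one_right_eq_Icc]
  simp only [Algebra.algebraMap_self, RingHom.id_apply, fibonomial_zero_right,
    fibonomial_succ_one, hb0, hb1, Nat.add_sub_cancel, Nat.sub_zero, zero_add, map_one, map_neg,
    map_mul]
  ring
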